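/- The explicit pair (η₁(∞), η₂(∞)) is an equilibrium of the two-level model: 𝒦₁(η₁(∞), η₂(∞)) = 0 and 𝒦₂(η₁(∞), η₂(∞)) = 0, where η₁(∞) = p(z₁⁺P₊ + z₁⁻P₋) and η₂(∞) = (1−p)(z₂⁺P₊ + z₂⁻P₋); moreover η₁(∞), η₂(∞) are positive semidefinite with Tr(η₁(∞)) + Tr(η₂(∞)) = 1. -/

import Mathlib

open Matrix
open scoped ComplexOrder

noncomputable section TwoLevel

def σm : Matrix (Fin 2) (Fin 2) ℂ := !![0, 0; 1, 0]
def σp : Matrix (Fin 2) (Fin 2) ℂ := !![0, 1; 0, 0]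
def σz : Matrix (Fin 2) (Fin 2) ℂ := !![1, 0; 0, -1]
def Pp : Matrix (Fin 2) (Fin 2) ℂ := !![1, 0; 0, 0]
def Pm : Matrix (Fin 2) (Fin 2) ℂ := !![0, 0; 0, 1]

/-- `𝒦₁` of the two-level model. -/
def K1 (γ₀ γ₁ γ₂ κ ω₁ : ℝ) (η₁ η₂ : Matrix (Fin 2) (Fin 2) ℂ) :
    Matrix (Fin 2) (Fin 2) ℂ :=
  (γ₀ : ℂ) • (σm * η₁ * σp - (1/2 : ℂ) • (Pp * η₁ + η₁ * Pp))
    + (γ₂ : ℂ) • (σp * η₂ * σm)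
    - ((γ₁ : ℂ)/2) • (Pp * η₁ + η₁ * Pp)
    - ((γ₀ : ℂ) * (κ : ℂ)) • η₁
    - (Complex.I * (ω₁ : ℂ) / 2) • (σz * η₁ - η₁ * σz)

/-- `𝒦₂` of the two-level model. -/
def K2 (γ₀ γ₁ γ₂ κ ω₂ : ℝ) (η₁ η₂ : Matrix (Fin 2) (Fin 2) ℂ) :
    Matrix (Fin 2) (Fin 2) ℂ :=
  (γ₀ : ℂ) • (σm * η₂ * σp - (1/2 : ℂ) • (Pp * η₂ + η₂ * Pp))
    + (γ₁ : ℂ) • (σm * η₁ * σp)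
    - ((γ₂ : ℂ)/2) • (Pm * η₂ + η₂ * Pm)
    + ((γ₀ : ℂ) * (κ : ℂ)) • η₁
    - (Complex.I * (ω₂ : ℂ) / 2) • (σz * η₂ - η₂ * σz)

/-- `κ₂ = γ₂κ/(γ₁+γ₀(1+κ))`. -/
def κ₂ (γ₀ γ₁ γ₂ κ : ℝ) : ℝ := γ₂ * κ / (γ₁ + γ₀ * (1 + κ))

/-- `z₁⁺ = κ₁/(1+κ₁)` with `κ₁ = κ`. -/
def z1p (κ : ℝ) : ℝ := κ / (1 + κ)

/-- `z₂⁺ = κ₂/(1+κ₂)`. -/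
def z2p (γ₀ γ₁ γ₂ κ : ℝ) : ℝ := κ₂ γ₀ γ₁ γ₂ κ / (1 + κ₂ γ₀ γ₁ γ₂ κ)

/-- `p = γ₂(1+κ)/(γ₂ + κ(γ₀+γ₁+γ₂) + κ²(γ₀+γ₂))`. -/
def peq (γ₀ γ₁ γ₂ κ : ℝ) : ℝ :=
  γ₂ * (1 + κ) / (γ₂ + κ * (γ₀ + γ₁ + γ₂) + κ ^ 2 * (γ₀ + γ₂))

/-- `η₁(∞) = p(z₁⁺P₊ + z₁⁻P₋)`. -/
def η1eq (γ₀ γ₁ γ₂ κ : ℝ) : Matrix (Fin 2) (Fin 2) ℂ :=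
  (peq γ₀ γ₁ γ₂ κ : ℂ) • ((z1p κ : ℂ) • Pp + ((1 - z1p κ : ℝ) : ℂ) • Pm)

/-- `η₂(∞) = (1−p)(z₂⁺P₊ + z₂⁻P₋)`. -/
def η2eq (γ₀ γ₁ γ₂ κ : ℝ) : Matrix (Fin 2) (Fin 2) ℂ :=
  ((1 - peq γ₀ γ₁ γ₂ κ : ℝ) : ℂ) •
    ((z2p γ₀ γ₁ γ₂ κ : ℂ) • Pp + ((1 - z2p γ₀ γ₁ γ₂ κ : ℝ) : ℂ) • Pm)

end TwoLevel

/-!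
On diagonal states the commutator with `σ_z` vanishes and both generators reduce to classical
rate equations for the four populations `(η₁)₊₊, (η₁)₋₋, (η₂)₊₊, (η₂)₋₋`. These have the
polynomial stationary solution `(γ₂κ, γ₂, γ₂κ², κ(γ₁ + γ₀(1+κ)))`, whose entries sum to the
denominator of `p`; normalising it gives exactly `(η₁(∞), η₂(∞))`, and since the generators are
linear, normalisation preserves stationarity.
-/

section Generator

variable (γ₀ γ₁ γ₂ κ ω : ℝ)

theorem K1_smul (t : ℂ) (η₁ η₂ : Matrix (Fin 2) (Fin 2) ℂ) :
    K1 γ₀ γ₁ γ₂ κ ω (t • η₁) (t • η₂) = t • K1 γ₀ γ₁ γ₂ κ ω η₁ η₂ := by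
  simp only [K1, Matrix.mul_smul, Matrix.smul_mul, smul_add, smul_sub, smul_comm t]

theorem K2_smul (t : ℂ) (η₁ η₂ : Matrix (Fin 2) (Fin 2) ℂ) :
    K2 γ₀ γ₁ γ₂ κ ω (t • η₁) (t • η₂) = t • K2 γ₀ γ₁ γ₂ κ ω η₁ η₂ := by
  simp only [K2, Matrix.mul_smul, Matrix.smul_mul, smul_add, smul_sub, smul_comm t]

theorem K1_diagonal (a b c d : ℂ) :
    K1 γ₀ γ₁ γ₂ κ ω (diagonal ![a, b]) (diagonal ![c, d]) =
      diagonal ![γ₂ * d - (γ₀ + γ₁ + γ₀ * κ) * a, γ₀ * a - γ₀ * κ * b] := by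
  ext i j
  fin_cases i <;> fin_cases j <;> simp [K1, σm, σp, σz, Pp, diagonal_vec2]
  ring

theorem K2_diagonal (a b c d : ℂ) :
    K2 γ₀ γ₁ γ₂ κ ω (diagonal ![a, b]) (diagonal ![c, d]) =
      diagonal ![γ₀ * κ * a - γ₀ * c, γ₀ * c + γ₁ * a - γ₂ * d + γ₀ * κ * b] := by
  ext i j
  fin_cases i <;> fin_cases j <;> simp [K2, σm, σp, σz, Pp, Pm, diagonal_vec2] <;> ring

end Generator

theorem smul_Pp_add_smul_Pm (a b : ℂ) : a • Pp + b • Pm = diagonal ![a, b] := by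
  rw [Pp, Pm, diagonal_vec2]
  ext i j
  fin_cases i <;> fin_cases j <;> simp

def peqDenom (γ₀ γ₁ γ₂ κ : ℝ) : ℝ := γ₂ + κ * (γ₀ + γ₁ + γ₂) + κ ^ 2 * (γ₀ + γ₂)

/- The unnormalised stationary populations solve the balance equations `η₁₊₊ = κ η₁₋₋`,
`η₂₊₊ = κ η₁₊₊` and `(γ₁ + γ₀(1+κ)) η₁₊₊ = γ₂ η₂₋₋` read off from `K1_diagonal` and
`K2_diagonal`, normalised by `η₁₋₋ = γ₂`. -/
def η1stat (γ₂ κ : ℝ) : Matrix (Fin 2) (Fin 2) ℂ := diagonal ![((γ₂ * κ : ℝ) : ℂ), (γ₂ : ℂ)]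

def η2stat (γ₀ γ₁ γ₂ κ : ℝ) : Matrix (Fin 2) (Fin 2) ℂ :=
  diagonal ![((γ₂ * κ ^ 2 : ℝ) : ℂ), ((κ * (γ₁ + γ₀ * (1 + κ)) : ℝ) : ℂ)]

section Populations

variable {γ₀ γ₁ γ₂ κ : ℝ}

theorem peq_mul_z1p (h1κ : 1 + κ ≠ 0) (hD : peqDenom γ₀ γ₁ γ₂ κ ≠ 0) :
    peq γ₀ γ₁ γ₂ κ * z1p κ = γ₂ * κ / peqDenom γ₀ γ₁ γ₂ κ := by
  rw [peq, ← peqDenom, z1p]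
  field_simp

theorem peq_mul_one_sub_z1p (h1κ : 1 + κ ≠ 0) (hD : peqDenom γ₀ γ₁ γ₂ κ ≠ 0) :
    peq γ₀ γ₁ γ₂ κ * (1 - z1p κ) = γ₂ / peqDenom γ₀ γ₁ γ₂ κ := by
  rw [peq, ← peqDenom, z1p]
  field_simp
  ring

theorem one_sub_peq (hD : peqDenom γ₀ γ₁ γ₂ κ ≠ 0) :
    1 - peq γ₀ γ₁ γ₂ κ = κ * (γ₁ + γ₀ * (1 + κ) + γ₂ * κ) / peqDenom γ₀ γ₁ γ₂ κ := by
  rw [peq, ← peqDenom, eq_div_iff hD, sub_mul, div_mul_cancel₀ _ hD, peqDenom]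
  ring

theorem z2p_eq (hS : γ₁ + γ₀ * (1 + κ) ≠ 0) (hS' : γ₁ + γ₀ * (1 + κ) + γ₂ * κ ≠ 0) :
    z2p γ₀ γ₁ γ₂ κ = γ₂ * κ / (γ₁ + γ₀ * (1 + κ) + γ₂ * κ) := by
  rw [z2p, κ₂]
  field_simp

theorem one_sub_z2p (hS : γ₁ + γ₀ * (1 + κ) ≠ 0) (hS' : γ₁ + γ₀ * (1 + κ) + γ₂ * κ ≠ 0) :
    1 - z2p γ₀ γ₁ γ₂ κ = (γ₁ + γ₀ * (1 + κ)) / (γ₁ + γ₀ * (1 + κ) + γ₂ * κ) := by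
  rw [z2p_eq hS hS', eq_div_iff hS', sub_mul, div_mul_cancel₀ _ hS']
  ring

theorem one_sub_peq_mul_z2p (hS : γ₁ + γ₀ * (1 + κ) ≠ 0)
    (hS' : γ₁ + γ₀ * (1 + κ) + γ₂ * κ ≠ 0) (hD : peqDenom γ₀ γ₁ γ₂ κ ≠ 0) :
    (1 - peq γ₀ γ₁ γ₂ κ) * z2p γ₀ γ₁ γ₂ κ = γ₂ * κ ^ 2 / peqDenom γ₀ γ₁ γ₂ κ := by
  rw [one_sub_peq hD, z2p_eq hS hS', div_mul_div_comm, div_eq_div_iff (mul_ne_zero hD hS') hD]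
  ring

theorem one_sub_peq_mul_one_sub_z2p (hS : γ₁ + γ₀ * (1 + κ) ≠ 0)
    (hS' : γ₁ + γ₀ * (1 + κ) + γ₂ * κ ≠ 0) (hD : peqDenom γ₀ γ₁ γ₂ κ ≠ 0) :
    (1 - peq γ₀ γ₁ γ₂ κ) * (1 - z2p γ₀ γ₁ γ₂ κ) =
      κ * (γ₁ + γ₀ * (1 + κ)) / peqDenom γ₀ γ₁ γ₂ κ := by
  rw [one_sub_peq hD, one_sub_z2p hS hS', div_mul_div_comm,
    div_eq_div_iff (mul_ne_zero hD hS') hD]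
  ring

theorem η1eq_eq_smul_η1stat (h1κ : 1 + κ ≠ 0) (hD : peqDenom γ₀ γ₁ γ₂ κ ≠ 0) :
    η1eq γ₀ γ₁ γ₂ κ = (((peqDenom γ₀ γ₁ γ₂ κ)⁻¹ : ℝ) : ℂ) • η1stat γ₂ κ := by
  rw [η1eq, η1stat, smul_Pp_add_smul_Pm, ← diagonal_smul, ← diagonal_smul]
  congr 1
  ext i
  fin_cases i
  · simpa [div_eq_inv_mul] using congrArg Complex.ofReal (peq_mul_z1p h1κ hD)
  · simpa [div_eq_inv_mul] using congrArg Complex.ofReal (peq_mul_one_sub_z1p h1κ hD)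

theorem η2eq_eq_smul_η2stat (hS : γ₁ + γ₀ * (1 + κ) ≠ 0)
    (hS' : γ₁ + γ₀ * (1 + κ) + γ₂ * κ ≠ 0) (hD : peqDenom γ₀ γ₁ γ₂ κ ≠ 0) :
    η2eq γ₀ γ₁ γ₂ κ = (((peqDenom γ₀ γ₁ γ₂ κ)⁻¹ : ℝ) : ℂ) • η2stat γ₀ γ₁ γ₂ κ := by
  rw [η2eq, η2stat, smul_Pp_add_smul_Pm, ← diagonal_smul, ← diagonal_smul]
  congr 1
  ext i
  fin_cases i
  · simpa [div_eq_inv_mul] using congrArg Complex.ofReal (one_sub_peq_mul_z2p hS hS' hD)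
  · simpa [div_eq_inv_mul] using congrArg Complex.ofReal (one_sub_peq_mul_one_sub_z2p hS hS' hD)

end Populations

section Stationary

variable (γ₀ γ₁ γ₂ κ ω : ℝ)

theorem K1_η1stat_η2stat : K1 γ₀ γ₁ γ₂ κ ω (η1stat γ₂ κ) (η2stat γ₀ γ₁ γ₂ κ) = 0 := by
  rw [η1stat, η2stat, K1_diagonal, diagonal_eq_zero]
  ext i
  fin_cases i <;> simp <;> ring

theorem K2_η1stat_η2stat : K2 γ₀ γ₁ γ₂ κ ω (η1stat γ₂ κ) (η2stat γ₀ γ₁ γ₂ κ) = 0 := by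
  rw [η1stat, η2stat, K2_diagonal, diagonal_eq_zero]
  ext i
  fin_cases i <;> simp <;> ring

theorem trace_η1stat_add_trace_η2stat :
    (η1stat γ₂ κ).trace + (η2stat γ₀ γ₁ γ₂ κ).trace = peqDenom γ₀ γ₁ γ₂ κ := by
  simp [η1stat, η2stat, peqDenom]
  ring

variable {γ₀ γ₁ γ₂ κ}

theorem η1stat_posSemidef (hγ₂ : 0 ≤ γ₂) (hκ : 0 ≤ κ) : (η1stat γ₂ κ).PosSemidef := by
  refine PosSemidef.diagonal fun i => ?_
  fin_cases i <;> simp <;> positivity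

theorem η2stat_posSemidef (hγ₀ : 0 ≤ γ₀) (hγ₁ : 0 ≤ γ₁) (hγ₂ : 0 ≤ γ₂) (hκ : 0 ≤ κ) :
    (η2stat γ₀ γ₁ γ₂ κ).PosSemidef := by
  refine PosSemidef.diagonal fun i => ?_
  fin_cases i <;> simp <;> positivity

end Stationary

/-- The explicit pair `(η₁(∞), η₂(∞))` is an equilibrium of the two-level model:
`𝒦₁(η₁(∞),η₂(∞)) = 0` and `𝒦₂(η₁(∞),η₂(∞)) = 0`; moreover `η₁(∞), η₂(∞)` are positive
semidefinite with `Tr(η₁(∞)) + Tr(η₂(∞)) = 1`. -/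
theorem two_level_equilibrium (γ₀ γ₁ γ₂ κ ω₁ ω₂ : ℝ)
    (hγ₀ : 0 < γ₀) (hγ₁ : 0 < γ₁) (hγ₂ : 0 < γ₂) (hκ : 0 < κ) :
    K1 γ₀ γ₁ γ₂ κ ω₁ (η1eq γ₀ γ₁ γ₂ κ) (η2eq γ₀ γ₁ γ₂ κ) = 0 ∧
    K2 γ₀ γ₁ γ₂ κ ω₂ (η1eq γ₀ γ₁ γ₂ κ) (η2eq γ₀ γ₁ γ₂ κ) = 0 ∧
    (η1eq γ₀ γ₁ γ₂ κ).PosSemidef ∧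
    (η2eq γ₀ γ₁ γ₂ κ).PosSemidef ∧
    (η1eq γ₀ γ₁ γ₂ κ).trace + (η2eq γ₀ γ₁ γ₂ κ).trace = 1 := by
  have hS : 0 < γ₁ + γ₀ * (1 + κ) := by positivity
  have hD : 0 < peqDenom γ₀ γ₁ γ₂ κ := by unfold peqDenom; positivity
  have hD_inv : (0 : ℂ) ≤ (((peqDenom γ₀ γ₁ γ₂ κ)⁻¹ : ℝ) : ℂ) :=
    Complex.zero_le_real.mpr (inv_nonneg.mpr hD.le)
  rw [η1eq_eq_smul_η1stat (by positivity) hD.ne',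
    η2eq_eq_smul_η2stat hS.ne' (by positivity) hD.ne']
  refine ⟨?_, ?_, ?_, ?_, ?_⟩
  · rw [K1_smul, K1_η1stat_η2stat, smul_zero]
  · rw [K2_smul, K2_η1stat_η2stat, smul_zero]
  · exact (η1stat_posSemidef hγ₂.le hκ.le).smul hD_inv
  · exact (η2stat_posSemidef hγ₀.le hγ₁.le hγ₂.le hκ.le).smul hD_inv
  · rw [trace_smul, trace_smul, smul_eq_mul, smul_eq_mul, ← mul_add,
      trace_η1stat_add_trace_η2stat, ← Complex.ofReal_mul, inv_mul_cancel₀ hD.ne',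
      Complex.ofReal_one]
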